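/- Every formula φ of ML(⊻) is 2^{vrank(φ)}-coherent, where vrank(φ) is the number of occurrences of ⊻ in φ: for every Kripke model K and every team T of K, K,T ⊨ φ if and only if K,T' ⊨ φ for all subteams T' ⊆ T with |T'| ≤ 2^{vrank(φ)}. -/

import Mathlib

/-- A Kripke model over a (nonempty) type `W` of worlds: an accessibility
relation `R` and a valuation `V`. -/
structure Kripke (W : Type) where
  R : W → W → Prop
  V : ℕ → Set W

/-- The image team `R[T] = {w | ∃ v ∈ T, v R w}`. -/
def Kripke.img {W : Type} (K : Kripke W) (T : Set W) : Set W :=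
  {w | ∃ v ∈ T, K.R v w}

/-- `T[R]S`: every world of `T` has an `R`-successor in `S` and every world of
`S` has an `R`-predecessor in `T`. -/
def Kripke.step {W : Type} (K : Kripke W) (T S : Set W) : Prop :=
  (∀ w ∈ T, ∃ v ∈ S, K.R w v) ∧ (∀ v ∈ S, ∃ w ∈ T, K.R w v)

/-- Formulas of `ML(⊻)`: modal logic in negation normal form extended with
intuitionistic disjunction `⊻` (`idis`). -/
inductive MLIForm : Type
  | pos : ℕ → MLIForm
  | neg : ℕ → MLIForm
  | and : MLIForm → MLIForm → MLIForm
  | or  : MLIForm → MLIForm → MLIForm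
  | dia : MLIForm → MLIForm
  | box : MLIForm → MLIForm
  | idis : MLIForm → MLIForm → MLIForm

/-- Team semantics for `ML(⊻)`. -/
def MLISat {W : Type} (K : Kripke W) : Set W → MLIForm → Prop
  | T, .pos p => T ⊆ K.V p
  | T, .neg p => T ∩ K.V p = ∅
  | T, .and φ ψ => MLISat K T φ ∧ MLISat K T ψ
  | T, .or φ ψ => ∃ T₁ T₂, T₁ ∪ T₂ = T ∧ MLISat K T₁ φ ∧ MLISat K T₂ ψ
  | T, .dia φ => ∃ T', K.step T T' ∧ MLISat K T' φ
  | T, .box φ => MLISat K (K.img T) φ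
  | T, .idis φ ψ => MLISat K T φ ∨ MLISat K T ψ

/-- `vrank φ`: the number of occurrences of `⊻` in an `ML(⊻)`-formula. -/
def vrank : MLIForm → ℕ
  | .pos _ => 0
  | .neg _ => 0
  | .and φ ψ => vrank φ + vrank ψ
  | .or φ ψ => vrank φ + vrank ψ
  | .dia φ => vrank φ
  | .box φ => vrank φ
  | .idis φ ψ => vrank φ + vrank ψ + 1

/-!
Distributing `∧`, `∨`, `◇` and `□` over `⊻` rewrites every formula `φ` as a `⊻` of at most
`2 ^ vrank φ` formulas without `⊻`, and formulas without `⊻` are flat: a team satisfies them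
iff each of its singletons does. A `⊻` of `n` flat properties is `n`-coherent: if a team fails
every disjunct, choosing one world that witnesses the failure of each disjunct yields a
subteam of at most `n` worlds that still fails every disjunct.
-/

theorem exists_of_forall_subset_encard_le_card {ι W : Type} [Fintype ι]
    (P : ι → Set W → Prop) (hP : ∀ i T, P i T ↔ ∀ w ∈ T, P i {w}) (T : Set W)
    (h : ∀ T' ⊆ T, T'.encard ≤ Fintype.card ι → ∃ i, P i T') :
    ∃ i, P i T := by
  by_contra! hT
  have hwitness : ∀ i, ∃ w ∈ T, ¬ P i {w} := fun i => by
    simpa [hP i T] using hT i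
  choose f hfT hf using hwitness
  have hcard : (Set.range f).encard ≤ Fintype.card ι := by
    rw [← Set.image_univ]
    exact (Set.encard_image_le f _).trans (by simp)
  obtain ⟨i, hi⟩ := h _ (Set.range_subset_iff.2 hfT) hcard
  exact hf i ((hP i _).1 hi (f i) (Set.mem_range_self i))

def disjuncts : MLIForm → List MLIForm
  | .pos p => [.pos p]
  | .neg p => [.neg p]
  | .and φ ψ => (disjuncts φ ×ˢ disjuncts ψ).map fun p => .and p.1 p.2
  | .or φ ψ => (disjuncts φ ×ˢ disjuncts ψ).map fun p => .or p.1 p.2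
  | .dia φ => (disjuncts φ).map .dia
  | .box φ => (disjuncts φ).map .box
  | .idis φ ψ => disjuncts φ ++ disjuncts ψ

theorem vrank_eq_zero_of_mem_disjuncts {φ θ : MLIForm} (hθ : θ ∈ disjuncts φ) :
    vrank θ = 0 := by
  induction φ generalizing θ with
  | pos p | neg p =>
    rw [disjuncts, List.mem_singleton] at hθ
    subst hθ
    rfl
  | and φ ψ ihφ ihψ | or φ ψ ihφ ihψ =>
    obtain ⟨⟨a, b⟩, hab, rfl⟩ := List.mem_map.1 hθ
    obtain ⟨ha, hb⟩ := List.mem_product.1 hab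
    simp [vrank, ihφ ha, ihψ hb]
  | dia φ ih | box φ ih =>
    obtain ⟨a, ha, rfl⟩ := List.mem_map.1 hθ
    simpa only [vrank] using ih ha
  | idis φ ψ ihφ ihψ => exact (List.mem_append.1 hθ).elim ihφ ihψ

theorem length_disjuncts_le (φ : MLIForm) : (disjuncts φ).length ≤ 2 ^ vrank φ := by
  induction φ with
  | pos p | neg p => simp [disjuncts, vrank]
  | and φ ψ ihφ ihψ | or φ ψ ihφ ihψ =>
    simpa [disjuncts, vrank, pow_add, List.length_product] using Nat.mul_le_mul ihφ ihψ
  | dia φ ih | box φ ih => simpa [disjuncts, vrank] using ih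
  | idis φ ψ ihφ ihψ =>
    have hφ : 2 ^ vrank φ ≤ 2 ^ (vrank φ + vrank ψ) := Nat.pow_le_pow_right two_pos (by omega)
    have hψ : 2 ^ vrank ψ ≤ 2 ^ (vrank φ + vrank ψ) := Nat.pow_le_pow_right two_pos (by omega)
    simp only [disjuncts, List.length_append, vrank, pow_succ]
    omega

namespace MLISat

variable {W : Type} {K : Kripke W}

theorem mono {φ : MLIForm} {T T' : Set W} (hT' : T' ⊆ T) (h : MLISat K T φ) :
    MLISat K T' φ := by
  induction φ generalizing T T' with
  | pos p => exact hT'.trans h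
  | neg p => exact Set.subset_eq_empty (Set.inter_subset_inter_left _ hT') h
  | and φ ψ ihφ ihψ => exact ⟨ihφ hT' h.1, ihψ hT' h.2⟩
  | or φ ψ ihφ ihψ =>
    obtain ⟨T₁, T₂, rfl, h₁, h₂⟩ := h
    refine ⟨T' ∩ T₁, T' ∩ T₂, ?_, ihφ Set.inter_subset_right h₁, ihψ Set.inter_subset_right h₂⟩
    rw [← Set.inter_union_distrib_left, Set.inter_eq_self_of_subset_left hT']
  | dia φ ih =>
    obtain ⟨S, ⟨hforth, -⟩, hS⟩ := h
    refine ⟨{v ∈ S | ∃ w ∈ T', K.R w v}, ⟨fun w hw => ?_, fun v hv => hv.2⟩,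
      ih (Set.sep_subset _ _) hS⟩
    obtain ⟨v, hv, hwv⟩ := hforth w (hT' hw)
    exact ⟨v, ⟨hv, w, hw, hwv⟩, hwv⟩
  | box φ ih =>
    refine ih ?_ h
    rintro v ⟨w, hw, hwv⟩
    exact ⟨w, hT' hw, hwv⟩
  | idis φ ψ ihφ ihψ => exact h.imp (ihφ hT') (ihψ hT')

theorem of_forall_singleton {φ : MLIForm} (hφ : vrank φ = 0) {T : Set W}
    (h : ∀ w ∈ T, MLISat K {w} φ) : MLISat K T φ := by
  induction φ generalizing T with
  | pos p => exact fun w hw => h w hw rfl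
  | neg p =>
    refine Set.eq_empty_iff_forall_notMem.2 fun w ⟨hw, hwp⟩ => ?_
    exact Set.singleton_inter_eq_empty.1 (h w hw) hwp
  | and φ ψ ihφ ihψ =>
    obtain ⟨hφ, hψ⟩ := Nat.add_eq_zero_iff.1 hφ
    exact ⟨ihφ hφ fun w hw => (h w hw).1, ihψ hψ fun w hw => (h w hw).2⟩
  | or φ ψ ihφ ihψ =>
    obtain ⟨hφ, hψ⟩ := Nat.add_eq_zero_iff.1 hφ
    have hsplit : ∀ w ∈ T, MLISat K {w} φ ∨ MLISat K {w} ψ := fun w hw => by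
      obtain ⟨T₁, T₂, hT, h₁, h₂⟩ := h w hw
      rcases (hT ▸ Set.mem_singleton w : w ∈ T₁ ∪ T₂) with hw₁ | hw₂
      · exact .inl (h₁.mono (Set.singleton_subset_iff.2 hw₁))
      · exact .inr (h₂.mono (Set.singleton_subset_iff.2 hw₂))
    refine ⟨{w ∈ T | MLISat K {w} φ}, {w ∈ T | MLISat K {w} ψ}, ?_,
      ihφ hφ fun w hw => hw.2, ihψ hψ fun w hw => hw.2⟩
    ext w
    simp only [Set.mem_union, Set.mem_ofPred_eq]
    exact ⟨fun hw => hw.elim (·.1) (·.1), fun hw => (hsplit w hw).imp (⟨hw, ·⟩) (⟨hw, ·⟩)⟩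
  | dia φ ih =>
    choose S hS hSφ using h
    refine ⟨⋃ (w) (hw : w ∈ T), S w hw, ⟨fun w hw => ?_, fun v hv => ?_⟩, ih hφ fun v hv => ?_⟩
    · obtain ⟨v, hv, hwv⟩ := (hS w hw).1 w rfl
      exact ⟨v, Set.mem_iUnion₂.2 ⟨w, hw, hv⟩, hwv⟩
    · obtain ⟨w, hw, hv⟩ := Set.mem_iUnion₂.1 hv
      obtain ⟨_, rfl, hwv⟩ := (hS w hw).2 v hv
      exact ⟨_, hw, hwv⟩
    · obtain ⟨w, hw, hv⟩ := Set.mem_iUnion₂.1 hv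
      exact (hSφ w hw).mono (Set.singleton_subset_iff.2 hv)
  | box φ ih =>
    refine ih hφ ?_
    rintro v ⟨w, hw, hwv⟩
    refine (h w hw).mono (Set.singleton_subset_iff.2 ?_)
    exact ⟨w, rfl, hwv⟩
  | idis φ ψ _ _ => simp [vrank] at hφ

theorem iff_forall_singleton {φ : MLIForm} (hφ : vrank φ = 0) {T : Set W} :
    MLISat K T φ ↔ ∀ w ∈ T, MLISat K {w} φ :=
  ⟨fun h _ hw => h.mono (Set.singleton_subset_iff.2 hw), of_forall_singleton hφ⟩

theorem iff_exists_mem_disjuncts {φ : MLIForm} {T : Set W} :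
    MLISat K T φ ↔ ∃ θ ∈ disjuncts φ, MLISat K T θ := by
  induction φ generalizing T with
  | pos p | neg p => simp [disjuncts]
  | and φ ψ ihφ ihψ =>
    simp only [MLISat, ihφ, ihψ, disjuncts, List.mem_map, List.mem_product, Prod.exists]
    constructor
    · rintro ⟨⟨θ, hθ, h₁⟩, η, hη, h₂⟩
      exact ⟨_, ⟨θ, η, ⟨hθ, hη⟩, rfl⟩, h₁, h₂⟩
    · rintro ⟨_, ⟨θ, η, ⟨hθ, hη⟩, rfl⟩, h₁, h₂⟩
      exact ⟨⟨θ, hθ, h₁⟩, η, hη, h₂⟩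
  | or φ ψ ihφ ihψ =>
    simp only [MLISat, ihφ, ihψ, disjuncts, List.mem_map, List.mem_product, Prod.exists]
    constructor
    · rintro ⟨T₁, T₂, hT, ⟨θ, hθ, h₁⟩, η, hη, h₂⟩
      exact ⟨_, ⟨θ, η, ⟨hθ, hη⟩, rfl⟩, T₁, T₂, hT, h₁, h₂⟩
    · rintro ⟨_, ⟨θ, η, ⟨hθ, hη⟩, rfl⟩, T₁, T₂, hT, h₁, h₂⟩
      exact ⟨T₁, T₂, hT, ⟨θ, hθ, h₁⟩, η, hη, h₂⟩
  | dia φ ih =>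
    simp only [MLISat, ih, disjuncts, List.mem_map]
    constructor
    · rintro ⟨S, hS, θ, hθ, h⟩
      exact ⟨_, ⟨θ, hθ, rfl⟩, S, hS, h⟩
    · rintro ⟨_, ⟨θ, hθ, rfl⟩, S, hS, h⟩
      exact ⟨S, hS, θ, hθ, h⟩
  | box φ ih => simp [MLISat, ih, disjuncts]
  | idis φ ψ ihφ ihψ => simp [MLISat, ihφ, ihψ, disjuncts, or_and_right, exists_or]

end MLISat

theorem mli_coherence_general {W : Type} (K : Kripke W) (T : Set W)
    (φ : MLIForm) :
    MLISat K T φ ↔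
      ∀ T' ⊆ T, T'.encard ≤ (2 ^ vrank φ : ℕ) → MLISat K T' φ := by
  refine ⟨fun h T' hT' _ => h.mono hT', fun h => ?_⟩
  set l := disjuncts φ
  have hflat : ∀ (i : Fin l.length) (T : Set W), MLISat K T l[i] ↔ ∀ w ∈ T, MLISat K {w} l[i] :=
    fun i _ => MLISat.iff_forall_singleton (vrank_eq_zero_of_mem_disjuncts (List.getElem_mem _))
  simp only [MLISat.iff_exists_mem_disjuncts (φ := φ), List.exists_mem_iff_get] at h ⊢
  refine exists_of_forall_subset_encard_le_card (fun i T => MLISat K T l[i]) hflat T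
    fun T' hT' hcard => h T' hT' (hcard.trans ?_)
  exact_mod_cast (Fintype.card_fin _).trans_le (length_disjuncts_le φ)

/-- Every `ML(⊻)`-formula `φ` is `2^{vrank φ}`-coherent:
`K,T ⊨ φ` iff `K,T' ⊨ φ` for every subteam `T' ⊆ T` of size at most
`2^{vrank φ}`. -/
theorem mli_coherence {W : Type} [Nonempty W] (K : Kripke W) (T : Set W)
    (φ : MLIForm) :
    MLISat K T φ ↔
      ∀ T' ⊆ T, T'.encard ≤ (2 ^ vrank φ : ℕ) → MLISat K T' φ :=
  mli_coherence_general K T φ
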